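/- arXiv:1709.07097 — 3 statements merged into one kernel-verified Lean document; each statement's English description precedes it below -/
import Mathlib

section
/- (Strong Law of Large Numbers in a Banach space, direct implication.) Let B be a separable real Banach space and {V_n}_{n∈ℕ} a sequence of independent, identically distributed random variables with values in B such that 𝔼‖V_1‖ < ∞. Setting S_n = V_1 + ⋯ + V_n, the averages S_n/n converge almost surely (in the norm of B) to the Bochner integral 𝔼(V_1). -/
open MeasureTheory ProbabilityTheory Filter Topology

/-- Strong Law of Large Numbers in a separable Banach space, direct implication:
if `V 0, V 1, …` are independent identically distributed `B`-valued random variables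
with `𝔼‖V 0‖ < ∞` (i.e. `V 0` is Bochner integrable), then the averages
`S n / n = (n : ℝ)⁻¹ • (V 0 + ⋯ + V (n-1))` converge almost surely in norm to the
Bochner integral `𝔼(V 0)`. -/
theorem strong_law_banach
    {B : Type*} [NormedAddCommGroup B] [NormedSpace ℝ B] [CompleteSpace B]
    [TopologicalSpace.SeparableSpace B] [MeasurableSpace B] [BorelSpace B]
    {Ω : Type*} [MeasurableSpace Ω] (P : Measure Ω) [IsProbabilityMeasure P]
    (V : ℕ → Ω → B)
    (hindep : iIndepFun V P)
    (hident : ∀ n, IdentDistrib (V n) (V 0) P P)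
    (hint : Integrable (V 0) P) :
    ∀ᵐ ω ∂P, Tendsto (fun n : ℕ => (n : ℝ)⁻¹ • ∑ i ∈ Finset.range n, V i ω)
      atTop (𝓝 (∫ ω, V 0 ω ∂P)) := by
  exact strong_law_ae V hint (fun i j hij => hindep.indepFun hij) hident
end

section
/- (Strong Law of Large Numbers in a Banach space, converse implication.) Let B be a separable real Banach space and {V_n}_{n∈ℕ} a sequence of independent, identically distributed random variables with values in B. If the averages S_n/n = (V_1 + ⋯ + V_n)/n converge almost surely in norm to some (deterministic) element L of B, then 𝔼‖V_1‖ < ∞ (and consequently L = 𝔼(V_1)). -/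
open MeasureTheory ProbabilityTheory Filter Topology
open scoped ENNReal NNReal

-- auxiliary: monotonicity of iIndep
lemma iIndep_mono' {Ω ι : Type*} {_ : MeasurableSpace Ω} {m m' : ι → MeasurableSpace Ω}
    {μ : Measure Ω} (h : ProbabilityTheory.iIndep m μ) (hle : ∀ i, m' i ≤ m i) :
    ProbabilityTheory.iIndep m' μ := by
  rw [iIndep_iff] at h ⊢
  intro s f hf
  exact h s fun i hi => hle i _ (hf i hi)

-- pointwise bound: t ≤ #{n : ℕ | n ≤ t}
lemma enorm_le_tsum_indicator {t : ℝ} (ht : 0 ≤ t) :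
    (‖t‖₊ : ℝ≥0∞) ≤ ∑' n : ℕ, (if (n : ℝ) ≤ t then (1 : ℝ≥0∞) else 0) := by
  have hz : ∀ b ∉ Finset.range (⌊t⌋₊ + 1), (if (b : ℝ) ≤ t then (1 : ℝ≥0∞) else 0) = 0 := by
    intro b hb
    rw [Finset.mem_range, not_lt] at hb
    rw [if_neg]
    rw [not_le]
    calc t < ⌊t⌋₊ + 1 := Nat.lt_floor_add_one t
    _ ≤ b := by exact_mod_cast hb
  rw [tsum_eq_sum hz]
  have : ∀ b ∈ Finset.range (⌊t⌋₊ + 1), (if (b : ℝ) ≤ t then (1 : ℝ≥0∞) else 0) = 1 := by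
    intro b hb
    rw [Finset.mem_range, Nat.lt_add_one_iff] at hb
    rw [if_pos ((Nat.le_floor_iff ht).1 hb)]
  rw [Finset.sum_congr rfl this, Finset.sum_const, Finset.card_range, nsmul_eq_mul, mul_one]
  have h1 : (‖t‖₊ : ℝ≥0∞) = ENNReal.ofReal t := by
    rw [← enorm_eq_nnnorm, ← ofReal_norm, Real.norm_of_nonneg ht]
  rw [h1]
  calc ENNReal.ofReal t ≤ ENNReal.ofReal ((⌊t⌋₊ : ℝ) + 1) :=
        ENNReal.ofReal_le_ofReal (Nat.lt_floor_add_one t).le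
  _ = ((⌊t⌋₊ + 1 : ℕ) : ℝ≥0∞) := by
        rw [← ENNReal.ofReal_natCast]; norm_num

/-- Strong Law of Large Numbers in a separable Banach space, converse implication:
if `V 0, V 1, …` are independent identically distributed (strongly measurable)
`B`-valued random variables whose averages `S n / n` converge almost surely in norm
to some deterministic `L : B`, then `𝔼‖V 0‖ < ∞` (i.e. `V 0` is Bochner integrable),
and consequently `L = 𝔼(V 0)`. -/
theorem strong_law_banach_converse
    {B : Type*} [NormedAddCommGroup B] [NormedSpace ℝ B] [CompleteSpace B]
    [TopologicalSpace.SeparableSpace B] [MeasurableSpace B] [BorelSpace B]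
    {Ω : Type*} [MeasurableSpace Ω] (P : Measure Ω) [IsProbabilityMeasure P]
    (V : ℕ → Ω → B)
    (hmeas : ∀ n, StronglyMeasurable (V n))
    (hindep : iIndepFun V P)
    (hident : ∀ n, IdentDistrib (V n) (V 0) P P)
    (L : B)
    (hconv : ∀ᵐ ω ∂P, Tendsto (fun n : ℕ => (n : ℝ)⁻¹ • ∑ i ∈ Finset.range n, V i ω)
      atTop (𝓝 L)) :
    Integrable (V 0) P ∧ L = ∫ ω, V 0 ω ∂P := by
  -- the events `‖V n‖ ≥ n`
  set C : ℕ → Set B := fun n => {x | (n : ℝ) ≤ ‖x‖} with hC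
  have hCmeas : ∀ n, MeasurableSet (C n) := fun n =>
    measurableSet_le measurable_const measurable_norm
  set s : ℕ → Set Ω := fun n => V n ⁻¹' C n with hs
  have hsmeas : ∀ n, MeasurableSet (s n) := fun n => (hmeas n).measurable (hCmeas n)
  -- the events are independent
  have hindepset : iIndepSet s P := by
    rw [iIndepSet_iff_iIndep]
    refine iIndep_mono' ((iIndepFun_iff_iIndep _ V P).1 hindep) fun i => ?_
    refine MeasurableSpace.generateFrom_le fun t ht => ?_
    rw [Set.mem_singleton_iff] at ht
    subst ht
    exact ⟨C i, hCmeas i, rfl⟩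
  -- a.s., `V n / n → 0`, hence eventually `‖V n ω‖ < n`
  have hV0 : ∀ᵐ ω ∂P, ∀ᶠ n in atTop, ω ∉ s n := by
    filter_upwards [hconv] with ω hω
    set a : ℕ → B := fun n => (n : ℝ)⁻¹ • ∑ i ∈ Finset.range n, V i ω with ha
    have h1 : Tendsto (fun n : ℕ => ((n + 1 : ℕ) : ℝ)⁻¹ • V n ω) atTop (𝓝 0) := by
      have key : ∀ n : ℕ, ((n + 1 : ℕ) : ℝ)⁻¹ • V n ω
          = a (n + 1) - ((n : ℝ) / ((n : ℝ) + 1)) • a n := by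
        intro n
        rcases Nat.eq_zero_or_pos n with hn | hn
        · subst hn; simp [ha]
        · have hn' : (n : ℝ) ≠ 0 := Nat.cast_ne_zero.2 hn.ne'
          have hn1 : ((n : ℝ) + 1) ≠ 0 := by positivity
          simp only [ha, Finset.sum_range_succ, smul_add, smul_smul]
          have : (n : ℝ) / ((n : ℝ) + 1) * (n : ℝ)⁻¹ = ((n : ℝ) + 1)⁻¹ := by
            field_simp
          rw [this]
          push_cast
          abel
      rw [show (0 : B) = L - (1 : ℝ) • L by simp]
      simp only [key]
      apply Tendsto.sub
      · exact hω.comp (tendsto_add_atTop_nat 1)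
      · apply Tendsto.smul _ hω
        have := tendsto_natCast_div_add_atTop (𝕜 := ℝ) 1
        exact this
    have h2 : Tendsto (fun n : ℕ => ‖((n + 1 : ℕ) : ℝ)⁻¹ • V n ω‖) atTop (𝓝 0) := by
      simpa using h1.norm
    have h3 : ∀ᶠ n : ℕ in atTop, ‖((n + 1 : ℕ) : ℝ)⁻¹ • V n ω‖ < 1 / 2 :=
      (tendsto_order.1 h2).2 _ (by norm_num)
    filter_upwards [h3, eventually_ge_atTop 1] with n hn hn1
    simp only [hs, Set.mem_preimage, hC, Set.mem_setOf_eq, not_le]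
    have hpos : (0 : ℝ) < (n : ℝ) + 1 := by positivity
    have : ‖V n ω‖ < ((n : ℝ) + 1) / 2 := by
      rw [norm_smul, norm_inv, Real.norm_of_nonneg (by positivity : (0:ℝ) ≤ ((n+1 : ℕ) : ℝ))] at hn
      push_cast at hn ⊢
      rw [inv_mul_lt_iff₀ hpos] at hn
      linarith
    have h4 : ((n : ℝ) + 1) / 2 ≤ n := by
      have : (1 : ℝ) ≤ n := by exact_mod_cast hn1
      linarith
    linarith
  -- hence the sum of the probabilities is finite, by the second Borel-Cantelli lemma
  have hsum : ∑' n, P (s n) ≠ ∞ := by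
    intro h
    have h1 : P (limsup s atTop) = 1 := measure_limsup_eq_one hsmeas hindepset h
    have h0 : P (limsup s atTop) = 0 := by
      have : ∀ᵐ ω ∂P, ω ∉ limsup s atTop := by
        filter_upwards [hV0] with ω hω
        rw [mem_limsup_iff_frequently_mem]
        intro hfreq
        obtain ⟨n, hn1, hn2⟩ := (hfreq.and_eventually hω).exists
        exact hn2 hn1
      exact measure_eq_zero_iff_ae_notMem.2 this
    rw [h0] at h1
    exact zero_ne_one h1
  -- this gives integrability of `V 0`
  have hint : Integrable (V 0) P := by
    refine ⟨(hmeas 0).aestronglyMeasurable, ?_⟩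
    rw [HasFiniteIntegral]
    calc ∫⁻ ω, ‖V 0 ω‖₊ ∂P
        ≤ ∫⁻ ω, ∑' n : ℕ, (if (n : ℝ) ≤ ‖V 0 ω‖ then (1 : ℝ≥0∞) else 0) ∂P := by
          apply lintegral_mono fun ω => ?_
          simpa using enorm_le_tsum_indicator (norm_nonneg (V 0 ω))
      _ = ∑' n : ℕ, ∫⁻ ω, (if (n : ℝ) ≤ ‖V 0 ω‖ then (1 : ℝ≥0∞) else 0) ∂P := by
          apply lintegral_tsum fun n => ?_
          exact (Measurable.ite ((hmeas 0).measurable (hCmeas n)) measurable_const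
            measurable_const).aemeasurable
      _ = ∑' n : ℕ, P (V 0 ⁻¹' C n) := by
          refine tsum_congr fun n => ?_
          rw [← lintegral_indicator_one ((hmeas 0).measurable (hCmeas n))]
          refine lintegral_congr fun ω => ?_
          simp [Set.indicator_apply, hC]
      _ = ∑' n, P (s n) := by
          refine tsum_congr fun n => ?_
          exact ((hident n).measure_mem_eq (hCmeas n)).symm
      _ < ∞ := hsum.lt_top
  refine ⟨hint, ?_⟩
  -- finally, apply the strong law of large numbers and uniqueness of limits
  have hslln := strong_law_ae V hint (fun i j hij => hindep.indepFun hij) hident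
  obtain ⟨ω, hω1, hω2⟩ := (hconv.and hslln).exists
  exact tendsto_nhds_unique hω1 hω2
end

section
/- Let f_1, …, f_n : ℝ → ℝ be functions that are each Lipschitz continuous with constant L ≥ 0. Then for every k with 1 ≤ k ≤ n, the function y ↦ (k-th largest value among f_1(y), …, f_n(y)) is Lipschitz continuous with constant L. In particular, for every finite persistence diagram D and every k, the k-th persistence landscape λ^k_D is Lipschitz continuous with constant 1. -/
noncomputable section

open scoped BigOperators

/-- The triangle function of a point `z = (b, d)` of a persistence diagram. -/
def tri (z : ℝ × ℝ) (y : ℝ) : ℝ :=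
  if z.1 - z.2 ≤ y ∧ y ≤ z.1 then y - z.1 + z.2
  else if z.1 < y ∧ y ≤ z.1 + z.2 then z.1 + z.2 - y
  else 0

/-- The `k`-th largest value of a finite multiset of reals (`0` if `k` is out of range). -/
def kmax (s : Multiset ℝ) (k : ℕ) : ℝ :=
  if 1 ≤ k ∧ k ≤ Multiset.card s then (s.sort (· ≤ ·)).getD (Multiset.card s - k) 0 else 0

/-- The `k`-th largest value among `a 1, …, a n`. -/
def kmaxF {n : ℕ} (a : Fin n → ℝ) (k : ℕ) : ℝ :=
  kmax (Multiset.map a Finset.univ.val) k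

/-- The `k`-th persistence landscape of the persistence diagram `D` (as a tuple of points). -/
def landscape {n : ℕ} (D : Fin n → ℝ × ℝ) (k : ℕ) (y : ℝ) : ℝ :=
  kmaxF (fun i => tri (D i) y) k

/-- The bottleneck distance between two persistence diagrams of the same cardinality:
the infimum over bijections of the largest sup-norm displacement.  (Recall that the
distance on `ℝ × ℝ` is the sup-distance `max (|b - b'|) (|d - d'|)`.) -/
def bottleneck {n : ℕ} (D E : Fin n → ℝ × ℝ) : ℝ :=
  ⨅ γ : Equiv.Perm (Fin n), ⨆ i, dist (D i) (E (γ i))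

/- ### Auxiliary lemmas -/

lemma list_countP_ge (l : List ℝ) (hs : l.Pairwise (· ≤ ·)) (k : ℕ) (h1 : 1 ≤ k)
    (h2 : k ≤ l.length) :
    k ≤ l.countP (fun x => decide (l.getD (l.length - k) 0 ≤ x)) := by
  set m := l.length with hm
  have hmk : m - k < m := by omega
  have hvget : l.getD (m - k) 0 = l.get ⟨m - k, hmk⟩ := by
    rw [List.getD_eq_getElem l 0 hmk]; rfl
  have hdrop : (l.drop (m - k)).countP (fun x => decide (l.getD (m - k) 0 ≤ x))
      = (l.drop (m - k)).length := by
    rw [List.countP_eq_length]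
    intro x hx
    obtain ⟨j, hj, rfl⟩ := List.getElem_of_mem hx
    rw [List.getElem_drop]
    have hjm : m - k + j < m := by
      rw [List.length_drop] at hj; omega
    have hmono : l[m - k] ≤ l[m - k + j] := by
      simpa using hs.rel_get_of_le (a := ⟨m - k, hmk⟩) (b := ⟨m - k + j, hjm⟩) (by simp)
    simp only [decide_eq_true_eq]
    rw [hvget, List.get_eq_getElem]
    exact hmono
  set p := fun x : ℝ => decide (l.getD (m - k) 0 ≤ x) with hp
  have hsplit : l.countP p = (l.take (m - k)).countP p + (l.drop (m - k)).countP p := by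
    conv_lhs => rw [← List.take_append_drop (m - k) l]
    rw [List.countP_append]
  have hlen : (l.drop (m - k)).length = k := by
    rw [List.length_drop]; omega
  omega

lemma list_le_kmax (l : List ℝ) (hs : l.Pairwise (· ≤ ·)) (k : ℕ) (h1 : 1 ≤ k)
    (h2 : k ≤ l.length) (c : ℝ)
    (hc : k ≤ l.countP (fun x => decide (c ≤ x))) :
    c ≤ l.getD (l.length - k) 0 := by
  by_contra hlt
  push_neg at hlt
  set m := l.length with hm
  have hmk : m - k < m := by omega
  have hvget : l.getD (m - k) 0 = l.get ⟨m - k, hmk⟩ := by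
    rw [List.getD_eq_getElem l 0 hmk]; rfl
  have h0 : (l.take (m - k + 1)).countP (fun x => decide (c ≤ x)) = 0 := by
    rw [List.countP_eq_zero]
    intro x hx
    obtain ⟨j, hj, rfl⟩ := List.getElem_of_mem hx
    have hjlen : j < m := by
      rw [List.length_take] at hj; omega
    rw [List.getElem_take]
    have hj' : j ≤ m - k := by rw [List.length_take] at hj; omega
    have := hs.rel_get_of_le (a := ⟨j, hjlen⟩) (b := ⟨m - k, hmk⟩) (by simpa using hj')
    simp only [decide_eq_true_eq, not_le]
    rw [hvget] at hlt
    calc l[j] ≤ _ := this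
    _ < c := hlt
  have hle : (l.drop (m - k + 1)).countP (fun x => decide (c ≤ x)) ≤ k - 1 := by
    refine le_trans (List.countP_le_length) ?_
    rw [List.length_drop]; omega
  have hsplit : l.countP (fun x => decide (c ≤ x))
      = (l.take (m - k + 1)).countP (fun x => decide (c ≤ x))
        + (l.drop (m - k + 1)).countP (fun x => decide (c ≤ x)) := by
    conv_lhs => rw [← List.take_append_drop (m - k + 1) l]
    rw [List.countP_append]
  omega

lemma countP_kmax (s : Multiset ℝ) (k : ℕ) (h1 : 1 ≤ k) (h2 : k ≤ Multiset.card s) :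
    k ≤ s.countP (fun x => kmax s k ≤ x) := by
  have hlen : (s.sort (· ≤ ·)).length = Multiset.card s := Multiset.length_sort _
  have key := list_countP_ge (s.sort (· ≤ ·)) (Multiset.pairwise_sort s _) k h1
    (by rw [hlen]; exact h2)
  rw [hlen] at key
  rw [kmax, if_pos ⟨h1, h2⟩]
  calc k ≤ _ := key
  _ = Multiset.countP (fun x => (s.sort (· ≤ ·)).getD (Multiset.card s - k) 0 ≤ x) s := by
      rw [← Multiset.coe_countP, Multiset.sort_eq]

lemma le_kmax (s : Multiset ℝ) (k : ℕ) (h1 : 1 ≤ k) (h2 : k ≤ Multiset.card s) (c : ℝ)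
    (hc : k ≤ s.countP (fun x => c ≤ x)) : c ≤ kmax s k := by
  have hlen : (s.sort (· ≤ ·)).length = Multiset.card s := Multiset.length_sort _
  rw [kmax, if_pos ⟨h1, h2⟩]
  have hc' : k ≤ (s.sort (· ≤ ·)).countP (fun x => decide (c ≤ x)) := by
    rw [← Multiset.sort_eq s (· ≤ ·), Multiset.coe_countP] at hc
    exact hc
  have := list_le_kmax (s.sort (· ≤ ·)) (Multiset.pairwise_sort s _) k h1
    (by rw [hlen]; exact h2) c hc'
  rwa [hlen] at this

lemma kmaxF_le_add {n : ℕ} (a b : Fin n → ℝ) (ε : ℝ) (h : ∀ i, a i ≤ b i + ε)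
    (k : ℕ) (h1 : 1 ≤ k) (h2 : k ≤ n) : kmaxF a k ≤ kmaxF b k + ε := by
  have hca : Multiset.card (Multiset.map a Finset.univ.val) = n := by simp
  have hcb : Multiset.card (Multiset.map b Finset.univ.val) = n := by simp
  have hka := countP_kmax (Multiset.map a Finset.univ.val) k h1 (by rw [hca]; exact h2)
  set v := kmax (Multiset.map a Finset.univ.val) k with hv
  have hmono : (Multiset.map a Finset.univ.val).countP (fun x => v ≤ x)
      ≤ (Multiset.map b Finset.univ.val).countP (fun x => v - ε ≤ x) := by
    rw [Multiset.countP_map, Multiset.countP_map]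
    refine Multiset.card_le_card (Multiset.monotone_filter_right _ ?_)
    intro i hi
    have := h i
    linarith
  have hfin := le_kmax (Multiset.map b Finset.univ.val) k h1 (by rw [hcb]; exact h2)
    (v - ε) (le_trans hka hmono)
  show v ≤ kmax (Multiset.map b Finset.univ.val) k + ε
  linarith

lemma kmaxF_lip (n : ℕ) (L : NNReal) (f : Fin n → ℝ → ℝ) (hf : ∀ i, LipschitzWith L (f i))
    (k : ℕ) (h1 : 1 ≤ k) (h2 : k ≤ n) :
    LipschitzWith L (fun y => kmaxF (fun i => f i y) k) := by
  apply LipschitzWith.of_dist_le_mul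
  intro x y
  rw [Real.dist_eq, abs_sub_le_iff]
  have hd : ∀ i, |f i x - f i y| ≤ L * dist x y := by
    intro i
    have := (hf i).dist_le_mul x y
    rwa [Real.dist_eq] at this
  constructor
  · have := kmaxF_le_add (fun i => f i x) (fun i => f i y) (L * dist x y)
      (fun i => by have := (abs_sub_le_iff.mp (hd i)).1; linarith) k h1 h2
    linarith
  · have := kmaxF_le_add (fun i => f i y) (fun i => f i x) (L * dist x y)
      (fun i => by have := (abs_sub_le_iff.mp (hd i)).2; linarith) k h1 h2
    linarith

lemma tri_lip (z : ℝ × ℝ) (hz : 0 ≤ z.2) : LipschitzWith 1 (tri z) := by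
  obtain ⟨b, d⟩ := z
  simp only at hz
  have heq : tri (b, d) = fun y => max 0 (min (y - b + d) (b + d - y)) := by
    funext y
    simp only [tri]
    split_ifs with h1 h2
    · rw [min_eq_left (by linarith [h1.1, h1.2]), max_eq_right (by linarith [h1.1])]
    · rw [min_eq_right (by linarith [h2.1]), max_eq_right (by linarith [h2.2])]
    · symm
      apply max_eq_left
      rcases le_or_gt y b with h | h
      · have hy : y < b - d := by
          by_contra hy
          push_neg at hy
          exact h1 ⟨hy, h⟩
        exact le_trans (min_le_left _ _) (by linarith)
      · have hy : b + d < y := by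
          by_contra hy
          push_neg at hy
          exact h2 ⟨h, hy⟩
        exact le_trans (min_le_right _ _) (by linarith)
  rw [heq]
  have hA : LipschitzWith 1 (fun y : ℝ => y - b + d) := by
    apply LipschitzWith.of_dist_le_mul
    intro x y
    rw [Real.dist_eq, Real.dist_eq, NNReal.coe_one, one_mul]
    apply le_of_eq
    congr 1
    ring
  have hB : LipschitzWith 1 (fun y : ℝ => b + d - y) := by
    apply LipschitzWith.of_dist_le_mul
    intro x y
    rw [Real.dist_eq, Real.dist_eq, NNReal.coe_one, one_mul]
    rw [show b + d - x - (b + d - y) = y - x by ring, abs_sub_comm]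
  have h3 := (hA.min hB).const_max 0
  rwa [max_self] at h3

/-- If `f 1, …, f n : ℝ → ℝ` are all Lipschitz with constant `L`, then so is
`y ↦ k`-th largest value among `f 1 y, …, f n y`, for every `1 ≤ k ≤ n`.
In particular, every persistence landscape `λ^k_D` is Lipschitz with constant `1`. -/
theorem kmax_lipschitz_and_landscape_lipschitz :
    (∀ (n : ℕ) (L : NNReal) (f : Fin n → ℝ → ℝ), (∀ i, LipschitzWith L (f i)) →
      ∀ k : ℕ, 1 ≤ k → k ≤ n → LipschitzWith L (fun y => kmaxF (fun i => f i y) k)) ∧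
    (∀ (m : ℕ) (D : Fin m → ℝ × ℝ), (∀ i, 0 ≤ (D i).2) →
      ∀ k : ℕ, LipschitzWith 1 (fun y => landscape D k y)) := by
  constructor
  · exact kmaxF_lip
  · intro m D hD k
    by_cases hk : 1 ≤ k ∧ k ≤ m
    · have := kmaxF_lip m 1 (fun i => tri (D i)) (fun i => tri_lip (D i) (hD i)) k hk.1 hk.2
      exact this
    · have hzero : (fun y => landscape D k y) = fun _ => (0 : ℝ) := by
        funext y
        unfold landscape kmaxF kmax
        rw [if_neg]
        intro hcond
        rw [Multiset.card_map] at hcond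
        simp at hcond
        exact hk ⟨hcond.1, hcond.2⟩
      rw [hzero]
      exact LipschitzWith.const' 0
end
end
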